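/- arXiv:2206.13149 — 2 statements merged into one kernel-verified Lean document; each statement's English description precedes it below -/
import Mathlib

section
/- For every t ∈ [0,T) one has A′(t) ≤ (3/4)·(1 + |C(0)|²/u(0)), where u(0) = A(0)B − |C(0)|²; consequently A(t) ≤ A(0) + (3/4)·(1 + |C(0)|²/u(0))·t for all t ∈ [0,T). (This a priori bound is what yields long-time existence of the flow.) -/
open Complex
open scoped ENNReal

/-! The flow makes `N = ‖C‖²` decrease (`N′ = -(3/8 + c²/2) B N / u ≤ 0`) and `u = AB - N`
increase (`u′ = A′B - N′ ≥ 0`), so `N / u`, and with it `A′ = (3/4)(1 + N / u)`, is largest at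
`t = 0`. Integrating this bound on `A′` gives the linear growth of `A`. -/

theorem convex_setOf_nonneg_ofReal_lt (T : ℝ≥0∞) :
    Convex ℝ {t : ℝ | 0 ≤ t ∧ ENNReal.ofReal t < T} := by
  refine Set.OrdConnected.convex ⟨?_⟩
  rintro x ⟨hx, -⟩ y ⟨-, hy⟩ z ⟨hxz, hzy⟩
  exact ⟨hx.trans hxz, (ENNReal.ofReal_le_ofReal hzy).trans_lt hy⟩

section DerivWithinConvex

variable {D : Set ℝ} {f f' : ℝ → ℝ}

theorem Convex.monotoneOn_of_forall_hasDerivWithinAt_nonneg (hD : Convex ℝ D)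
    (hf : ∀ x ∈ D, HasDerivWithinAt f (f' x) D x) (hf' : ∀ x ∈ D, 0 ≤ f' x) :
    MonotoneOn f D :=
  monotoneOn_of_hasDerivWithinAt_nonneg hD (fun x hx ↦ (hf x hx).continuousWithinAt)
    (fun x hx ↦ (hf x (interior_subset hx)).mono interior_subset)
    (fun x hx ↦ hf' x (interior_subset hx))

theorem Convex.antitoneOn_of_forall_hasDerivWithinAt_nonpos (hD : Convex ℝ D)
    (hf : ∀ x ∈ D, HasDerivWithinAt f (f' x) D x) (hf' : ∀ x ∈ D, f' x ≤ 0) :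
    AntitoneOn f D :=
  antitoneOn_of_hasDerivWithinAt_nonpos hD (fun x hx ↦ (hf x hx).continuousWithinAt)
    (fun x hx ↦ (hf x (interior_subset hx)).mono interior_subset)
    (fun x hx ↦ hf' x (interior_subset hx))

theorem Convex.sub_le_mul_sub_of_hasDerivWithinAt_le (hD : Convex ℝ D)
    (hf : ∀ x ∈ D, HasDerivWithinAt f (f' x) D x) {K : ℝ} (hf' : ∀ x ∈ D, f' x ≤ K)
    {x y : ℝ} (hx : x ∈ D) (hy : y ∈ D) (hxy : x ≤ y) :
    f y - f x ≤ K * (y - x) := by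
  have hmono : MonotoneOn (fun s ↦ K * s - f s) D :=
    hD.monotoneOn_of_forall_hasDerivWithinAt_nonneg
      (fun s hs ↦ ((hasDerivWithinAt_id s D).const_mul K).sub (hf s hs))
      (fun s hs ↦ by linarith [hf' s hs])
  linarith [hmono hx hy hxy]

end DerivWithinConvex

theorem HasDerivWithinAt.norm_sq_of_mul_self {C : ℝ → ℂ} {a : ℂ} {s : Set ℝ} {t : ℝ}
    (hC : HasDerivWithinAt C (a * C t) s t) :
    HasDerivWithinAt (‖C ·‖ ^ 2) (2 * a.re * ‖C t‖ ^ 2) s t := by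
  convert hC.norm_sq using 1
  rw [Complex.inner, mul_assoc a, mul_conj, ← Complex.normSq_eq_norm_sq, re_mul_ofReal]
  ring

theorem HasDerivWithinAt.norm_sq_of_pluriclosed {B c u : ℝ} {C : ℝ → ℂ} {s : Set ℝ} {t : ℝ}
    (hC : HasDerivWithinAt C
      (-(3 / 16 + (c : ℂ) ^ 2 / 4 + I * c / 4) * B * C t / (u : ℂ)) s t) :
    HasDerivWithinAt (‖C ·‖ ^ 2) (-((3 / 8 + c ^ 2 / 2) * B * ‖C t‖ ^ 2 / u)) s t := by
  have hC' : HasDerivWithinAt C (-(3 / 16 + (c : ℂ) ^ 2 / 4 + I * c / 4) * B / u * C t) s t := by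
    convert hC using 1; ring
  convert hC'.norm_sq_of_mul_self using 1
  simp [div_ofReal_re, ← ofReal_pow]
  ring

theorem stmt_2_general (B c : ℝ) (hB : 0 < B) (T : ℝ≥0∞)
    (A : ℝ → ℝ) (C : ℝ → ℂ)
    (S : Set ℝ) (hSdef : S = {t : ℝ | 0 ≤ t ∧ ENNReal.ofReal t < T})
    (hpos : ∀ t ∈ S, 0 < A t * B - ‖C t‖ ^ 2)
    (hA : ∀ t ∈ S, HasDerivWithinAt A
      ((3 / 4) * (1 + ‖C t‖ ^ 2 / (A t * B - ‖C t‖ ^ 2))) S t)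
    (hC : ∀ t ∈ S, HasDerivWithinAt C
      (-(3 / 16 + (c : ℂ) ^ 2 / 4 + Complex.I * (c : ℂ) / 4) * (B : ℂ) * C t /
        ((A t * B - ‖C t‖ ^ 2 : ℝ) : ℂ)) S t) :
    (∀ t ∈ S, (3 / 4) * (1 + ‖C t‖ ^ 2 / (A t * B - ‖C t‖ ^ 2)) ≤
      (3 / 4) * (1 + ‖C 0‖ ^ 2 / (A 0 * B - ‖C 0‖ ^ 2))) ∧
    (∀ t ∈ S, A t ≤ A 0 +
      (3 / 4) * (1 + ‖C 0‖ ^ 2 / (A 0 * B - ‖C 0‖ ^ 2)) * t) := by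
  set N : ℝ → ℝ := fun t ↦ ‖C t‖ ^ 2
  set u : ℝ → ℝ := fun t ↦ A t * B - N t
  have hS : Convex ℝ S := hSdef ▸ convex_setOf_nonneg_ofReal_lt T
  have hS_nonneg : ∀ t ∈ S, 0 ≤ t := by rw [hSdef]; exact fun t ht ↦ ht.1
  have hS_zero : ∀ t ∈ S, (0 : ℝ) ∈ S := by
    rw [hSdef]; exact fun t ht ↦ ⟨le_rfl, (ENNReal.ofReal_le_ofReal ht.1).trans_lt ht.2⟩
  have hN : ∀ t ∈ S, HasDerivWithinAt N (-((3 / 8 + c ^ 2 / 2) * B * N t / u t)) S t :=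
    fun t ht ↦ (hC t ht).norm_sq_of_pluriclosed
  have hN_rate : ∀ t ∈ S, 0 ≤ (3 / 8 + c ^ 2 / 2) * B * N t / u t := fun t ht ↦
    have := hpos t ht; by positivity
  have hA' : ∀ t ∈ S, 0 ≤ (3 / 4) * (1 + N t / u t) := fun t ht ↦
    have := hpos t ht; by positivity
  have hN_anti : AntitoneOn N S :=
    hS.antitoneOn_of_forall_hasDerivWithinAt_nonpos hN fun t ht ↦ by linarith [hN_rate t ht]
  have hu_mono : MonotoneOn u S :=
    hS.monotoneOn_of_forall_hasDerivWithinAt_nonneg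
      (fun t ht ↦ ((hA t ht).mul_const B).sub (hN t ht))
      fun t ht ↦ by linarith [mul_nonneg (hA' t ht) hB.le, hN_rate t ht]
  have hbound : ∀ t ∈ S, (3 / 4) * (1 + N t / u t) ≤ (3 / 4) * (1 + N 0 / u 0) := by
    intro t ht
    have h0 := hS_zero t ht
    have := div_le_div₀ (by positivity) (hN_anti h0 ht (hS_nonneg t ht)) (hpos 0 h0)
      (hu_mono h0 ht (hS_nonneg t ht))
    linarith
  refine ⟨hbound, fun t ht ↦ ?_⟩
  linarith [hS.sub_le_mul_sub_of_hasDerivWithinAt_le hA hbound (hS_zero t ht) ht (hS_nonneg t ht)]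

/-- Along the pluriclosed-flow ODE system on `[0,T)`, the right-hand side of
the equation for `A` is bounded: `A′(t) ≤ (3/4)·(1 + |C(0)|²/u(0))` with
`u(0) = A(0)B − |C(0)|²`; consequently
`A(t) ≤ A(0) + (3/4)·(1 + |C(0)|²/u(0))·t` for all `t ∈ [0,T)`. -/
theorem stmt_2 (B c : ℝ) (hB : 0 < B) (T : ℝ≥0∞) (hT : 0 < T)
    (A : ℝ → ℝ) (C : ℝ → ℂ)
    (S : Set ℝ) (hSdef : S = {t : ℝ | 0 ≤ t ∧ ENNReal.ofReal t < T})
    (hpos : ∀ t ∈ S, 0 < A t * B - ‖C t‖ ^ 2)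
    (hA : ∀ t ∈ S, HasDerivWithinAt A
      ((3 / 4) * (1 + ‖C t‖ ^ 2 / (A t * B - ‖C t‖ ^ 2))) S t)
    (hC : ∀ t ∈ S, HasDerivWithinAt C
      (-(3 / 16 + (c : ℂ) ^ 2 / 4 + Complex.I * (c : ℂ) / 4) * (B : ℂ) * C t /
        ((A t * B - ‖C t‖ ^ 2 : ℝ) : ℂ)) S t) :
    (∀ t ∈ S, (3 / 4) * (1 + ‖C t‖ ^ 2 / (A t * B - ‖C t‖ ^ 2)) ≤
      (3 / 4) * (1 + ‖C 0‖ ^ 2 / (A 0 * B - ‖C 0‖ ^ 2))) ∧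
    (∀ t ∈ S, A t ≤ A 0 +
      (3 / 4) * (1 + ‖C 0‖ ^ 2 / (A 0 * B - ‖C 0‖ ^ 2)) * t) :=
  stmt_2_general B c hB T A C S hSdef hpos hA hC
end

section
/- If the solution is defined on all of [0,∞) (i.e. T = ∞), then A(t)/(1+t) → 3/4 and C(t)/(1+t) → 0 as t → ∞; in particular A(t) is asymptotic to (3/4)·t. (This gives the normalized convergence ω_t/(1+t) → 3ω_∞ of the pluriclosed flow on an Oeljeklaus-Toma manifold.) -/
open Complex Filter Set Topology

/-!
The `C`-equation is a linear damping `C' = -λ C` whose rate `λ` has nonnegative real part,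
so `‖C‖` never increases. Hence `A' ≥ 3/4`, so `A t ≥ A 0 + 3t/4`, and the positive quantity
`A B - ‖C‖²` grows at least like `A 0 B - ‖C 0‖² + 3Bt/4`. Feeding this back into the
`A`-equation gives `A' ≤ 3/4 + O(1/(1+t))`, whence `A t = 3t/4 + O(log t)`.
-/

theorem le_of_hasDerivWithinAt_Ici {f g f' g' : ℝ → ℝ} {a t : ℝ}
    (hf : ∀ s ∈ Ici a, HasDerivWithinAt f (f' s) (Ici a) s)
    (hg : ∀ s ∈ Ici a, HasDerivWithinAt g (g' s) (Ici a) s)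
    (hfg : ∀ s ∈ Ici a, f' s ≤ g' s) (ha : f a ≤ g a) (ht : t ∈ Ici a) :
    f t ≤ g t := by
  have hmono : MonotoneOn (fun s => g s - f s) (Ici a) :=
    monotoneOn_of_hasDerivWithinAt_nonneg (convex_Ici a)
      (fun s hs => ((hg s hs).sub (hf s hs)).continuousWithinAt)
      (fun s hs => ((hg s (interior_subset hs)).sub (hf s (interior_subset hs))).mono
        interior_subset)
      (fun s hs => sub_nonneg.2 (hfg s (interior_subset hs)))
  linarith [hmono self_mem_Ici ht ht]

theorem add_mul_le_of_le_deriv {f f' : ℝ → ℝ} {b t : ℝ}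
    (hf : ∀ s ∈ Ici 0, HasDerivWithinAt f (f' s) (Ici 0) s)
    (hb : ∀ s ∈ Ici 0, b ≤ f' s) (ht : t ∈ Ici 0) :
    f 0 + t * b ≤ f t :=
  le_of_hasDerivWithinAt_Ici (f := fun s => f 0 + s * b)
    (fun s _ => ((hasDerivAt_mul_const b).const_add (f 0)).hasDerivWithinAt) hf hb
    (by simp) ht

theorem norm_le_of_inner_deriv_nonpos {F : Type*} [NormedAddCommGroup F]
    [InnerProductSpace ℝ F] {f f' : ℝ → F} {a t : ℝ}
    (hf : ∀ s ∈ Ici a, HasDerivWithinAt f (f' s) (Ici a) s)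
    (hinner : ∀ s ∈ Ici a, inner ℝ (f s) (f' s) ≤ 0) (ht : t ∈ Ici a) :
    ‖f t‖ ≤ ‖f a‖ := by
  have hsq : ‖f t‖ ^ 2 ≤ ‖f a‖ ^ 2 :=
    le_of_hasDerivWithinAt_Ici (fun s hs => (hf s hs).norm_sq)
      (fun s _ => hasDerivWithinAt_const s _ (‖f a‖ ^ 2))
      (fun s hs => by linarith [hinner s hs]) le_rfl ht
  exact (pow_le_pow_iff_left₀ (norm_nonneg _) (norm_nonneg _) two_ne_zero).1 hsq

theorem Complex.inner_mul_self (w z : ℂ) : inner ℝ z (w * z) = w.re * ‖z‖ ^ 2 := by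
  rw [Complex.inner, Complex.sq_norm, Complex.normSq_apply]
  simp only [mul_re, mul_im, conj_re, conj_im]
  ring

theorem Complex.inner_neg_mul_mul_div_nonpos {w : ℂ} (hw : 0 ≤ w.re) {r s : ℝ} (hr : 0 ≤ r)
    (hs : 0 ≤ s) (z : ℂ) : inner ℝ z (-w * r * z / s) ≤ 0 := by
  have hre : (-w * r / s).re = -(w.re * r / s) := by simp [div_ofReal_re, neg_div]
  rw [mul_div_right_comm, Complex.inner_mul_self, hre, neg_mul, neg_nonpos]
  positivity

theorem tendsto_affine_div_one_add (a b : ℝ) :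
    Tendsto (fun t : ℝ => (a + t * b) / (1 + t)) atTop (𝓝 b) := by
  have h : Tendsto (fun t : ℝ => b + (a - b) / (1 + t)) atTop (𝓝 (b + 0)) :=
    tendsto_const_nhds.add (tendsto_const_nhds.div_atTop
      (tendsto_atTop_add_const_left _ _ tendsto_id))
  rw [add_zero] at h
  refine h.congr' ?_
  filter_upwards [eventually_gt_atTop 0] with t ht
  field_simp
  ring

theorem tendsto_log_affine_div_one_add (p : ℝ) {q : ℝ} (hq : 0 < q) :
    Tendsto (fun t : ℝ => Real.log (p + q * t) / (1 + t)) atTop (𝓝 0) := by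
  have h := (Real.tendsto_pow_log_div_mul_add_atTop q⁻¹ (1 - p / q) 1 (by positivity)).comp
    (tendsto_atTop_add_const_left _ p (tendsto_id.const_mul_atTop hq))
  refine h.congr' (Eventually.of_forall fun t => ?_)
  simp only [Function.comp_apply, id, pow_one]
  congr 1
  field_simp
  ring

theorem tendsto_div_one_add_of_deriv_bounds {f f' : ℝ → ℝ} {b m p q : ℝ}
    (hp : 0 < p) (hq : 0 < q)
    (hf : ∀ t ∈ Ici 0, HasDerivWithinAt f (f' t) (Ici 0) t)
    (hlow : ∀ t ∈ Ici 0, b ≤ f' t) (hup : ∀ t ∈ Ici 0, f' t ≤ b + m / (p + q * t)) :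
    Tendsto (fun t => f t / (1 + t)) atTop (𝓝 b) := by
  have hpq : ∀ t ∈ Ici (0 : ℝ), 0 < p + q * t := fun t ht =>
    add_pos_of_pos_of_nonneg hp (mul_nonneg hq.le ht)
  -- the solution of `Φ' = b + m / (p + q t)`, `Φ 0 = f 0`, bounds `f` from above
  set a := f 0 - m / q * Real.log p
  have hΦ : ∀ t ∈ Ici (0 : ℝ), HasDerivWithinAt
      (fun t => a + t * b + m / q * Real.log (p + q * t)) (b + m / (p + q * t)) (Ici 0) t := by
    intro t ht
    have hlog := (((hasDerivAt_id t).const_mul q).const_add p).log (hpq t ht).ne'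
    have hΦt := (((hasDerivAt_id t).mul_const b).const_add a).add (hlog.const_mul (m / q))
    refine (hΦt.congr_deriv ?_).hasDerivWithinAt
    simp only [id]
    field_simp
  have hupper : ∀ t ∈ Ici (0 : ℝ), f t ≤ a + t * b + m / q * Real.log (p + q * t) :=
    fun t ht => le_of_hasDerivWithinAt_Ici hf hΦ hup (by simp [a]) ht
  have hlim : Tendsto (fun t => (a + t * b + m / q * Real.log (p + q * t)) / (1 + t)) atTop
      (𝓝 b) := by
    have h := (tendsto_affine_div_one_add a b).add
      ((tendsto_log_affine_div_one_add p hq).const_mul (m / q))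
    rw [mul_zero, add_zero] at h
    exact h.congr fun t => by ring
  refine tendsto_of_tendsto_of_tendsto_of_le_of_le' (tendsto_affine_div_one_add (f 0) b) hlim
    ?_ ?_ <;> filter_upwards [eventually_ge_atTop 0] with t ht <;>
    refine div_le_div_of_nonneg_right ?_ (by linarith)
  exacts [add_mul_le_of_le_deriv hf hlow ht, hupper t ht]

theorem Filter.Tendsto.div_self_of_div_one_add {f : ℝ → ℝ} {L : ℝ}
    (h : Tendsto (fun t => f t / (1 + t)) atTop (𝓝 L)) :
    Tendsto (fun t => f t / t) atTop (𝓝 L) := by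
  have hinv : Tendsto (fun t : ℝ => 1 + t⁻¹) atTop (𝓝 1) := by
    simpa using (tendsto_const_nhds (x := (1 : ℝ))).add tendsto_inv_atTop_zero
  refine (mul_one L ▸ h.mul hinv).congr' ?_
  filter_upwards [eventually_gt_atTop 0] with t ht
  field_simp
  ring

theorem tendsto_div_one_add_of_norm_le {𝕜 : Type*} [RCLike 𝕜] {g : ℝ → 𝕜} {M : ℝ}
    (hg : ∀ t ∈ Ici 0, ‖g t‖ ≤ M) :
    Tendsto (fun t : ℝ => g t / ((1 + t : ℝ) : 𝕜)) atTop (𝓝 0) := by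
  rw [tendsto_zero_iff_norm_tendsto_zero]
  refine squeeze_zero' (g := fun t => M / (1 + t)) (Eventually.of_forall fun t => norm_nonneg _) ?_
    (tendsto_const_nhds.div_atTop (tendsto_atTop_add_const_left _ 1 tendsto_id))
  filter_upwards [eventually_ge_atTop 0] with t ht
  rw [norm_div, RCLike.norm_ofReal, abs_of_pos (by linarith)]
  exact div_le_div_of_nonneg_right (hg t ht) (by linarith)

/-- If the solution of the pluriclosed-flow ODE system is defined on all of
`[0,∞)` (i.e. `T = ∞`), then `A(t)/(1+t) → 3/4` and `C(t)/(1+t) → 0` as `t → ∞`; in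
particular `A(t)` is asymptotic to `(3/4)·t` (this gives the normalized convergence
`ω_t/(1+t) → 3ω_∞` of the pluriclosed flow on an Oeljeklaus-Toma manifold). -/
theorem stmt_5 (B c : ℝ) (hB : 0 < B)
    (A : ℝ → ℝ) (C : ℝ → ℂ)
    (hpos : ∀ t ∈ Set.Ici (0 : ℝ), 0 < A t * B - ‖C t‖ ^ 2)
    (hA : ∀ t ∈ Set.Ici (0 : ℝ), HasDerivWithinAt A
      ((3 / 4) * (1 + ‖C t‖ ^ 2 / (A t * B - ‖C t‖ ^ 2)))
      (Set.Ici 0) t)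
    (hC : ∀ t ∈ Set.Ici (0 : ℝ), HasDerivWithinAt C
      (-(3 / 16 + (c : ℂ) ^ 2 / 4 + Complex.I * (c : ℂ) / 4) * (B : ℂ) * C t /
        ((A t * B - ‖C t‖ ^ 2 : ℝ) : ℂ)) (Set.Ici 0) t) :
    Tendsto (fun t => A t / (1 + t)) atTop (nhds (3 / 4)) ∧
    Tendsto (fun t : ℝ => C t / ((1 + t : ℝ) : ℂ)) atTop (nhds 0) ∧
    Tendsto (fun t => A t / t) atTop (nhds (3 / 4)) := by
  set D := fun t => A t * B - ‖C t‖ ^ 2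
  have hw : 0 ≤ (3 / 16 + (c : ℂ) ^ 2 / 4 + I * c / 4).re := by
    have hre : (3 / 16 + (c : ℂ) ^ 2 / 4 + I * c / 4).re = 3 / 16 + c ^ 2 / 4 := by
      simp [← ofReal_pow]
    rw [hre]
    positivity
  have hCle : ∀ t ∈ Ici (0 : ℝ), ‖C t‖ ≤ ‖C 0‖ := fun t ht =>
    norm_le_of_inner_deriv_nonpos hC
      (fun s hs => inner_neg_mul_mul_div_nonpos hw hB.le (hpos s hs).le (C s)) ht
  have hA'low : ∀ t ∈ Ici (0 : ℝ), 3 / 4 ≤ 3 / 4 * (1 + ‖C t‖ ^ 2 / D t) := fun t ht => by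
    have := div_nonneg (sq_nonneg ‖C t‖) (hpos t ht).le
    linarith
  have hDlow : ∀ t ∈ Ici (0 : ℝ), D 0 + 3 * B / 4 * t ≤ D t := fun t ht => by
    have hAt := add_mul_le_of_le_deriv hA hA'low ht
    have hCt := pow_le_pow_left₀ (norm_nonneg _) (hCle t ht) 2
    simp only [D]
    nlinarith
  have hA'up : ∀ t ∈ Ici (0 : ℝ),
      3 / 4 * (1 + ‖C t‖ ^ 2 / D t) ≤ 3 / 4 + 3 / 4 * ‖C 0‖ ^ 2 / (D 0 + 3 * B / 4 * t) :=
    fun t ht => by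
      have := div_le_div₀ (sq_nonneg _) (pow_le_pow_left₀ (norm_nonneg _) (hCle t ht) 2)
        (add_pos_of_pos_of_nonneg (hpos 0 self_mem_Ici) (mul_nonneg (by linarith) ht)) (hDlow t ht)
      rw [mul_div_assoc]
      linarith
  have hAlim := tendsto_div_one_add_of_deriv_bounds (hpos 0 self_mem_Ici) (by linarith) hA
    hA'low hA'up
  exact ⟨hAlim, tendsto_div_one_add_of_norm_le hCle, hAlim.div_self_of_div_one_add⟩
end
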